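/- Let μ, ν > 0 and let g_{μ,ν} be the inner product on 𝔤_0 whose matrix in the basis e₀, e₁, e₂ is diag(1, μ, ν), with Ricci form Ric. Then the space of all endomorphisms A of 𝔤_0 that are skew-symmetric with respect to both g_{μ,ν} and Ric is exactly the one-dimensional span of the endomorphism A₀ defined by A₀(e₀) = e₂, A₀(e₁) = 2e₂, A₀(e₂) = −ν·e₀ − (2ν/μ)·e₁. -/

import Mathlib

/-!
Nondegeneracy of `g_{μ,ν}` turns the Koszul formula into an explicit formula for `∇`, and
with it the Ricci form of `𝔤_0` becomes the symmetric form with matrix `ricciMatrixD μ ν`.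
An endomorphism with matrix `M` is skew for forms with Gram matrices `G` and `R` iff
`Mᵀ G = -G M` and `Mᵀ R = -R M`. For the diagonal `G` this leaves three free entries; the
`(0,0)` and `(0,2)` entries of the Ricci condition kill `M₁₀` and force `M₂₁ = 2 M₂₀`, so only
`M₂₀` remains.
-/

noncomputable section

open scoped BigOperators

/-- The underlying space of the 3-dimensional Lie algebras under consideration. -/
abbrev V3 : Type := Fin 3 → ℝ

/-- The standard basis `e₀, e₁, e₂`. -/
def e3 (i : Fin 3) : V3 := Pi.single i 1

/-- The bracket of the Lie algebra `𝔤_c`: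
`[e₀,e₁] = 0`, `[e₂,e₀] = e₁`, `[e₂,e₁] = −c e₀ + 2 e₁`, extended bilinearly. -/
def braC (c : ℝ) (x y : V3) : V3 :=
  ![-c * (x 2 * y 1 - y 2 * x 1),
    (x 2 * y 0 - y 2 * x 0) + 2 * (x 2 * y 1 - y 2 * x 1),
    0]

/-- The inner product with matrix `diag(1,μ,ν)` in the basis `e₀,e₁,e₂`. -/
def gD (μ ν : ℝ) (x y : V3) : ℝ := x 0 * y 0 + μ * (x 1 * y 1) + ν * (x 2 * y 2)

/-- The curvature tensor `R(X,Y)Z = ∇_X ∇_Y Z − ∇_Y ∇_X Z − ∇_{[X,Y]} Z`. -/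
def Rc (br nab : V3 → V3 → V3) (X Y Z : V3) : V3 :=
  nab X (nab Y Z) - nab Y (nab X Z) - nab (br X Y) Z

/-- The Ricci form `Ric(X,Y) = tr (Z ↦ R(Z,X)Y)`. -/
def RicF (br nab : V3 → V3 → V3) (X Y : V3) : ℝ :=
  ∑ k : Fin 3, Rc br nab (e3 k) X Y k

open Matrix

section SkewAdjoint

variable {R n : Type*} [CommRing R] [Fintype n] [DecidableEq n]

theorem toLinearMap₂'_skew_iff_isSkewAdjoint (J : Matrix n n R) (A : Module.End R (n → R)) :
    (∀ x y, toLinearMap₂' R J (A x) y + toLinearMap₂' R J x (A y) = 0) ↔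
      J.IsSkewAdjoint (LinearMap.toMatrix' A) := by
  rw [Matrix.IsSkewAdjoint, ← isAdjointPair_toLinearMap₂', map_neg, Matrix.toLin'_toMatrix']
  refine forall₂_congr fun x y => ?_
  rw [LinearMap.neg_apply, map_neg, ← add_eq_zero_iff_eq_neg]

end SkewAdjoint

theorem gD_eq_toLinearMap₂' (μ ν : ℝ) (x y : V3) :
    gD μ ν x y = toLinearMap₂' ℝ (diagonal ![1, μ, ν]) x y := by
  simp only [gD, toLinearMap₂'_apply', dotProduct, mulVec, Fin.sum_univ_three, diagonal_apply,
    Fin.reduceEq, if_true, if_false, cons_val_zero, cons_val_one, cons_val_two, tail_cons,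
    head_cons]
  ring

def leviCivitaD (μ ν : ℝ) (X Y : V3) : V3 :=
  ![-(μ * (X 1 * Y 2 + X 2 * Y 1)) / 2,
    (X 2 * Y 0 - X 0 * Y 2 - 4 * (X 1 * Y 2)) / 2,
    μ * (X 1 * Y 0 + X 0 * Y 1 + 4 * (X 1 * Y 1)) / (2 * ν)]

theorem eq_leviCivitaD_of_koszul {μ ν : ℝ} (hμ : μ ≠ 0) (hν : ν ≠ 0)
    {nab : V3 → V3 → V3}
    (hK : ∀ X Y Z : V3, 2 * gD μ ν (nab X Y) Z =
      gD μ ν (braC 0 X Y) Z - gD μ ν (braC 0 Y Z) X + gD μ ν (braC 0 Z X) Y) :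
    nab = leviCivitaD μ ν := by
  ext X Y i
  have h0 := hK X Y (e3 0)
  have h1 := hK X Y (e3 1)
  have h2 := hK X Y (e3 2)
  simp only [gD, braC, e3, Pi.single_apply, Fin.reduceEq, if_true, if_false,
    cons_val_zero, cons_val_one, cons_val_two, tail_cons, head_cons] at h0 h1 h2
  fin_cases i <;> simp only [leviCivitaD, Fin.zero_eta, Fin.mk_one, Fin.reduceFinMk,
    cons_val_zero, cons_val_one, cons_val_two, tail_cons, head_cons] <;> field_simp
  · linear_combination h0
  · apply mul_left_cancel₀ hμ
    linear_combination h1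
  · linear_combination h2

def ricciMatrixD (μ ν : ℝ) : Matrix (Fin 3) (Fin 3) ℝ :=
  !![-(μ / (2 * ν)), -(2 * μ / ν), 0;
     -(2 * μ / ν), μ * (μ - 8) / (2 * ν), 0;
     0, 0, -4 - μ / 2]

theorem ricF_leviCivitaD (μ ν : ℝ) (x y : V3) :
    RicF (braC 0) (leviCivitaD μ ν) x y = toLinearMap₂' ℝ (ricciMatrixD μ ν) x y := by
  simp only [RicF, Rc, leviCivitaD, braC, e3, ricciMatrixD, toLinearMap₂'_apply', dotProduct,
    mulVec, Fin.sum_univ_three, Pi.sub_apply, Pi.single_apply, Fin.reduceEq, if_true, if_false,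
    of_apply, cons_val', cons_val_fin_one, cons_val_zero, cons_val_one, cons_val, sub_cons,
    head_cons, tail_cons, sub_self, zero_empty]
  ring


theorem eq_smul_of_isSkewAdjoint_diagonal_ricciMatrixD {μ ν : ℝ} (hμ : μ ≠ 0)
    (hν : ν ≠ 0) {M : Matrix (Fin 3) (Fin 3) ℝ} (hG : (diagonal ![1, μ, ν]).IsSkewAdjoint M)
    (hR : (ricciMatrixD μ ν).IsSkewAdjoint M) :
    M = M 2 0 • !![0, 0, -ν; 0, 0, -(2 * ν / μ); 1, 2, 0] := by
  simp only [Matrix.IsSkewAdjoint, Matrix.IsAdjointPair, ← Matrix.ext_iff] at hG hR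
  simp only [Fin.forall_fin_succ, Matrix.mul_apply, transpose_apply, Fin.sum_univ_three,
    Matrix.neg_apply, mul_neg, Finset.sum_neg_distrib, neg_add_rev, diagonal_apply_eq,
    diagonal_apply_ne, ne_eq, Fin.reduceEq, not_false_eq_true, Fin.succ_zero_eq_one,
    Fin.succ_one_eq_two, Fin.succ_ne_zero, IsEmpty.forall_iff, and_true, cons_val_zero,
    cons_val_one, cons_val, ricciMatrixD, of_apply, cons_val', cons_val_fin_one, cons_val_succ,
    mul_one, one_mul, mul_zero, zero_mul, add_zero, zero_add, neg_zero, neg_mul, neg_neg] at hG hR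
  obtain ⟨⟨h00, h10, -⟩, ⟨-, h11, -⟩, h02, h12, h22⟩ := hG
  obtain ⟨⟨hR00, -, hR20⟩, -⟩ := hR
  have hM00 : M 0 0 = 0 := by linarith
  have hM11 : M 1 1 = 0 :=
    (mul_eq_zero.mp (show μ * M 1 1 = 0 by linear_combination h11 / 2)).resolve_left hμ
  have hM22 : M 2 2 = 0 :=
    (mul_eq_zero.mp (show ν * M 2 2 = 0 by linear_combination h22 / 2)).resolve_left hν
  have hM10 : M 1 0 = 0 := by
    rw [hM00] at hR00
    field_simp at hR00
    linarith
  have hM21 : M 2 1 = 2 * M 2 0 := by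
    rw [h02] at hR20
    field_simp at hR20
    have h : ν * (M 2 1 - 2 * M 2 0) = 0 := by linear_combination hR20 / 4 + h12
    exact sub_eq_zero.mp ((mul_eq_zero.mp h).resolve_left hν)
  ext i j
  fin_cases i <;> fin_cases j <;>
    simp only [Fin.zero_eta, Fin.mk_one, Fin.reduceFinMk, Matrix.smul_apply, of_apply, cons_val',
      cons_val_fin_one, cons_val_zero, cons_val_one, cons_val_two, tail_cons, vecHead, smul_eq_mul,
      mul_zero, mul_neg, mul_one]
  · exact hM00
  · linear_combination h10 - μ * hM10
  · linarith
  · exact hM10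
  · exact hM11
  · field_simp
    linear_combination h12 - ν * hM21
  · linear_combination hM21
  · exact hM22

theorem skewAdjoint_inf_ricciMatrixD_eq_span {μ ν : ℝ} (hμ : μ ≠ 0) (hν : ν ≠ 0) :
    skewAdjointMatricesSubmodule (diagonal ![1, μ, ν]) ⊓
        skewAdjointMatricesSubmodule (ricciMatrixD μ ν) =
      ℝ ∙ !![0, 0, -ν; 0, 0, -(2 * ν / μ); 1, 2, 0] := by
  apply le_antisymm
  · rintro M ⟨hG, hR⟩
    rw [SetLike.mem_coe, mem_skewAdjointMatricesSubmodule] at hG hR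
    exact Submodule.mem_span_singleton.mpr
      ⟨M 2 0, (eq_smul_of_isSkewAdjoint_diagonal_ricciMatrixD hμ hν hG hR).symm⟩
  · rw [Submodule.span_singleton_le_iff_mem, Submodule.mem_inf,
      mem_skewAdjointMatricesSubmodule, mem_skewAdjointMatricesSubmodule]
    constructor <;> ext i j <;> fin_cases i <;> fin_cases j <;>
      simp only [ricciMatrixD, Fin.zero_eta, Fin.mk_one, Fin.reduceFinMk, Matrix.mul_apply,
        transpose_apply, Matrix.neg_apply, of_apply, cons_val', cons_val_zero, cons_val_one,
        cons_val, cons_val_fin_one, Fin.sum_univ_three, diagonal_apply, Fin.reduceEq, if_true,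
        if_false] <;>
      field_simp <;> ring

/-- the endomorphisms of `𝔤_0` which are skew-symmetric with respect to
both `g_{μ,ν}` and its Ricci form are exactly the multiples of the endomorphism `A₀`
with `A₀ e₀ = e₂`, `A₀ e₁ = 2 e₂`, `A₀ e₂ = −ν e₀ − (2ν/μ) e₁`. -/
theorem stmt3 (μ ν : ℝ) (hμ : 0 < μ) (hν : 0 < ν) (nab : V3 → V3 → V3)
    (hK : ∀ X Y Z : V3, 2 * gD μ ν (nab X Y) Z =
      gD μ ν (braC 0 X Y) Z - gD μ ν (braC 0 Y Z) X + gD μ ν (braC 0 Z X) Y) :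
    ∀ A : Module.End ℝ V3,
      ((∀ x y : V3, gD μ ν (A x) y + gD μ ν x (A y) = 0) ∧
        (∀ x y : V3, RicF (braC 0) nab (A x) y + RicF (braC 0) nab x (A y) = 0))
      ↔ ∃ t : ℝ,
          A = t • Matrix.toLin' !![0, 0, -ν; 0, 0, -(2*ν/μ); 1, 2, 0] := by
  intro A
  obtain rfl := eq_leviCivitaD_of_koszul hμ.ne' hν.ne' hK
  simp only [gD_eq_toLinearMap₂', ricF_leviCivitaD, toLinearMap₂'_skew_iff_isSkewAdjoint,
    ← mem_skewAdjointMatricesSubmodule, ← Submodule.mem_inf,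
    skewAdjoint_inf_ricciMatrixD_eq_span hμ.ne' hν.ne', Submodule.mem_span_singleton]
  refine exists_congr fun t => ?_
  rw [eq_comm, ← LinearMap.toMatrix'.injective.eq_iff, map_smul, LinearMap.toMatrix'_toLin']
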